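/- arXiv:2604.22420 — 5 statements merged into one kernel-verified Lean document; each statement's English description precedes it below -/
import Mathlib

section
/- Let Ω ⊆ ℝ^m be open, μ a locally finite Borel (Radon) measure on Ω, δ > 0, and Ω_δ := {p ∈ Ω : closedBall(p, δ) ⊆ Ω}. Then the set {p ∈ Ω_δ : μ({q : |q − p| = δ}) > 0} of centers whose boundary sphere of radius δ carries positive μ-measure is contained in a Borel set of m-dimensional Lebesgue measure zero. -/
open MeasureTheory Metric ENNReal

/-!
By Tonelli applied to the set `{(p, q) | dist q p = δ}`, for every s-finite `ν` the integral of
`p ↦ ν (sphere p δ)` against Lebesgue measure equals the integral of `q ↦ vol (sphere q δ) = 0`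
against `ν`, so `ν (sphere p δ) = 0` for almost every `p`. Since `Ω` is σ-compact and `μ` is finite
on its compact subsets, `ν := μ.restrict Ω` is σ-finite, and it agrees with `μ` on every sphere
contained in `Ω`.
-/

theorem IsOpen.sigmaFinite_restrict {X : Type*} [TopologicalSpace X] [LocallyCompactSpace X]
    [SecondCountableTopology X] [MeasurableSpace X] [OpensMeasurableSpace X]
    {μ : Measure X} {U : Set X} (hU : IsOpen U) (hμ : ∀ K ⊆ U, IsCompact K → μ K < ∞) :
    SigmaFinite (μ.restrict U) := by
  have : LocallyCompactSpace U := hU.locallyCompactSpace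
  obtain ⟨K, hK, hKU⟩ : IsSigmaCompact U := isSigmaCompact_iff_sigmaCompactSpace.mpr inferInstance
  refine Measure.sigmaFinite_of_countable (S := insert Uᶜ (Set.range K))
    ((Set.countable_range K).insert _) ?_ ?_
  · rintro s (rfl | ⟨n, rfl⟩)
    · simp [Measure.restrict_apply hU.measurableSet.compl]
    · exact (Measure.restrict_apply_le U (K n)).trans_lt
        (hμ _ (hKU ▸ Set.subset_iUnion K n) (hK n))
  · rw [Set.sUnion_insert, Set.sUnion_range, hKU, Set.compl_union_self]

section Sphere

variable {X : Type*} [PseudoMetricSpace X] [SecondCountableTopology X] [MeasurableSpace X]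
  [BorelSpace X]

theorem measurableSet_dist_eq (r : ℝ) : MeasurableSet {pq : X × X | dist pq.2 pq.1 = r} :=
  (isClosed_eq (by fun_prop) continuous_const).measurableSet

theorem measurable_measure_sphere (ν : Measure X) [SFinite ν] (r : ℝ) :
    Measurable fun p ↦ ν (sphere p r) :=
  measurable_measure_prodMk_left (measurableSet_dist_eq r)

end Sphere

theorem ae_measure_sphere_eq_zero {E : Type*} [NormedAddCommGroup E] [NormedSpace ℝ E]
    [FiniteDimensional ℝ E] [MeasurableSpace E] [BorelSpace E]
    (μ : Measure E) [μ.IsAddHaarMeasure] (ν : Measure E) [SFinite ν] {r : ℝ} (hr : r ≠ 0) :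
    ∀ᵐ p ∂μ, ν (sphere p r) = 0 := by
  have hA := measurableSet_dist_eq (X := E) r
  have h_integral : ∫⁻ p, ν (sphere p r) ∂μ = 0 :=
    calc ∫⁻ p, ν (sphere p r) ∂μ = μ.prod ν {pq | dist pq.2 pq.1 = r} := (μ.prod_apply hA).symm
      _ = ∫⁻ q, μ (sphere q r) ∂ν := by
        rw [μ.prod_apply_symm hA]
        simp only [Set.preimage_ofPred_eq, dist_comm, ← mem_sphere, Set.ofPred_mem_eq]
      _ = 0 := by simp [Measure.addHaar_sphere_of_ne_zero μ _ hr]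
  exact (lintegral_eq_zero_iff (measurable_measure_sphere ν r)).mp h_integral

/-- The set of centers `p ∈ Ω_δ` whose boundary sphere of radius `δ` carries positive
`μ`-measure is contained in a Borel set of Lebesgue measure zero. -/
theorem positive_sphere_centers_null
    (m : ℕ) (Ω : Set (EuclideanSpace ℝ (Fin m))) (hΩ : IsOpen Ω)
    (μ : Measure (EuclideanSpace ℝ (Fin m)))
    (hμ : ∀ K ⊆ Ω, IsCompact K → μ K < ⊤)
    (δ : ℝ) (hδ : 0 < δ) :
    ∃ N : Set (EuclideanSpace ℝ (Fin m)), MeasurableSet N ∧ volume N = 0 ∧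
      {p ∈ Ω | closedBall p δ ⊆ Ω} ∩ {p | 0 < μ (sphere p δ)} ⊆ N := by
  have := hΩ.sigmaFinite_restrict hμ
  refine ⟨{p | μ.restrict Ω (sphere p δ) ≠ 0},
    (measurable_measure_sphere _ δ (measurableSet_singleton 0)).compl,
    ae_iff.mp (ae_measure_sphere_eq_zero volume _ hδ.ne'), ?_⟩
  rintro p ⟨⟨-, hball⟩, hpos⟩
  rw [Set.mem_ofPred_eq, Measure.restrict_apply isClosed_sphere.measurableSet,
    Set.inter_eq_left.mpr (sphere_subset_closedBall.trans hball)]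
  exact hpos.ne'
end

section
/- Let Ω ⊆ ℝ^m be open, let f : Ω → ℝ be Lebesgue measurable and locally bounded, and let Γ ⊆ B_1(0) ⊆ ℝ^m be a countable set. Then for Lebesgue-almost every point p ∈ Ω and every γ̇ ∈ Γ, the point t = 0 is a Lebesgue point of the map L^f_{p,γ̇} : (−ε, ε) → ℝ, t ↦ f(p + t γ̇), where ε > 0 is any radius with B_ε(p) ⊆ Ω. -/
/-!
Fix a direction `v`. By the one-dimensional Lebesgue differentiation theorem, on every line
`p + ℝ v` almost every point is a Lebesgue point of the restriction of `f` to that line, and Haar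
measure disintegrates along the translates of `ℝ v`, so the set of good points has full measure
once it is known to be measurable. Measurability holds because the mean oscillation at radius `r`
is at most twice the one at any radius in `[r, 2r]`, so only dyadic radii matter. Local
boundedness enters by cutting `f` off to compact subsets of `Ω`, which changes no line average at
interior points of the compact set; countably many such interiors cover the interior of `Ω`.
-/

open MeasureTheory Metric Filter Set Topology

section LineAverage

variable {E : Type*} [NormedAddCommGroup E] [NormedSpace ℝ E]

noncomputable def lineMeanOsc (f : E → ℝ) (p v : E) (r : ℝ) : ℝ :=
  (1 / (2 * r)) * ∫ t in Ioo (-r) r, |f (p + t • v) - f p|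

def IsLineLebesguePoint (f : E → ℝ) (p v : E) : Prop :=
  Tendsto (lineMeanOsc f p v) (𝓝[>] 0) (𝓝 0)

lemma lineMeanOsc_nonneg (f : E → ℝ) (p v : E) {r : ℝ} (hr : 0 ≤ r) :
    0 ≤ lineMeanOsc f p v r :=
  mul_nonneg (by positivity) (setIntegral_nonneg measurableSet_Ioo fun _ _ => abs_nonneg _)

lemma lineMeanOsc_le_two_mul {f : E → ℝ} {p v : E} {r s : ℝ}
    (hf : IntegrableOn (fun t : ℝ => f (p + t • v)) (Ioo (-s) s))
    (hr : 0 < r) (hrs : r ≤ s) (hsr : s ≤ 2 * r) :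
    lineMeanOsc f p v r ≤ 2 * lineMeanOsc f p v s := by
  have hs : 0 < s := hr.trans_le hrs
  set I : ℝ → ℝ := fun R => ∫ t in Ioo (-R) R, |f (p + t • v) - f p|
  have hmono : I r ≤ I s :=
    setIntegral_mono_set (hf.sub (integrableOn_const measure_Ioo_lt_top.ne)).abs
      (ae_of_all _ fun _ => abs_nonneg _) (Ioo_subset_Ioo (neg_le_neg hrs) hrs).eventuallyLE
  have hI : 0 ≤ I s := setIntegral_nonneg measurableSet_Ioo fun _ _ => abs_nonneg _
  calc 1 / (2 * r) * I r ≤ 1 / (2 * r) * I s := by gcongr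
    _ ≤ 2 * (1 / (2 * s)) * I s := by
        gcongr
        rw [div_le_iff₀ (by positivity)]
        field_simp
        linarith
    _ = 2 * (1 / (2 * s) * I s) := mul_assoc _ _ _

lemma lineMeanOsc_add_smul (f : E → ℝ) (p v : E) (s : ℝ) :
    lineMeanOsc f (p + s • v) v = lineMeanOsc (fun t : ℝ => f (p + t • v)) s 1 := by
  ext r
  simp only [lineMeanOsc, smul_eq_mul, mul_one, add_smul, add_assoc]

lemma IsLineLebesguePoint.congr_of_eventuallyEq {f g : E → ℝ} {p v : E}
    (hg : IsLineLebesguePoint g p v) (hfg : f =ᶠ[𝓝 p] g) : IsLineLebesguePoint f p v := by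
  have hline : ∀ᶠ t in 𝓝 (0 : ℝ), f (p + t • v) = g (p + t • v) := by
    have hcont : Continuous fun t : ℝ => p + t • v := by fun_prop
    have hlim : Tendsto (fun t : ℝ => p + t • v) (𝓝 0) (𝓝 p) := by simpa using hcont.tendsto 0
    exact hlim.eventually hfg
  obtain ⟨δ, hδ, hδline⟩ := Metric.eventually_nhds_iff.1 hline
  refine hg.congr' ?_
  filter_upwards [Ioo_mem_nhdsGT hδ] with r hr
  simp only [lineMeanOsc, hfg.self_of_nhds]
  congr 1
  refine setIntegral_congr_fun measurableSet_Ioo fun t ht => ?_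
  have htδ : dist t 0 < δ := by
    rw [Real.dist_eq, sub_zero, abs_lt]
    constructor <;> linarith [ht.1, ht.2, hr.2]
  rw [hδline htδ]

end LineAverage

lemma tendsto_nhdsGT_zero_of_tendsto_two_inv_pow {F : ℝ → ℝ} (hF₀ : ∀ r, 0 < r → 0 ≤ F r)
    (hF : ∀ r s, 0 < r → r ≤ s → s ≤ 2 * r → F r ≤ 2 * F s)
    (h : Tendsto (fun n : ℕ => F (2⁻¹ ^ n)) atTop (𝓝 0)) : Tendsto F (𝓝[>] 0) (𝓝 0) := by
  rw [Metric.tendsto_nhdsWithin_nhds]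
  intro ε hε
  obtain ⟨N, hN⟩ := Metric.tendsto_atTop.1 h (ε / 2) (half_pos hε)
  refine ⟨2⁻¹ ^ N, by positivity, fun r (hr : 0 < r) hrN => ?_⟩
  rw [Real.dist_eq, sub_zero, abs_of_pos hr] at hrN
  obtain ⟨n, hn, hn'⟩ := exists_nat_pow_near_of_lt_one hr
    (hrN.le.trans (pow_le_one₀ (by norm_num) (by norm_num))) (by norm_num : (0 : ℝ) < 2⁻¹)
    (by norm_num)
  have hNn : N ≤ n :=
    Nat.lt_succ_iff.1 ((pow_lt_pow_iff_right_of_lt_one₀ (by norm_num) (by norm_num)).1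
      (hn.trans hrN))
  have hFn : F (2⁻¹ ^ n) < ε / 2 := by
    have hdist := hN n hNn
    rw [Real.dist_eq, sub_zero] at hdist
    exact lt_of_abs_lt hdist
  rw [Real.dist_eq, sub_zero, abs_of_nonneg (hF₀ r hr)]
  calc F r ≤ 2 * F (2⁻¹ ^ n) := hF r _ hr hn' (by rw [pow_succ] at hn; linarith)
    _ < ε := by linarith

section Measurability

variable {E : Type*} [NormedAddCommGroup E] [NormedSpace ℝ E] [MeasurableSpace E]
  [BorelSpace E] [SecondCountableTopology E]

lemma measurable_lineMeanOsc {f : E → ℝ} (hf : Measurable f) (v : E) (r : ℝ) :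
    Measurable fun p => lineMeanOsc f p v r := by
  have hint : Measurable fun q : E × ℝ => |f (q.1 + q.2 • v) - f q.1| := by fun_prop
  exact (hint.stronglyMeasurable.integral_prod_right'
    (ν := volume.restrict (Ioo (-r) r))).measurable.const_mul _

lemma measurableSet_isLineLebesguePoint {f : E → ℝ} (hf : Measurable f) (v : E)
    (hline : ∀ p, LocallyIntegrable (fun t : ℝ => f (p + t • v))) :
    MeasurableSet {p | IsLineLebesguePoint f p v} := by
  have hdyadic : {p | IsLineLebesguePoint f p v} =
      {p | Tendsto (fun n : ℕ => lineMeanOsc f p v (2⁻¹ ^ n)) atTop (𝓝 0)} := by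
    ext p
    refine ⟨fun h => h.comp (tendsto_pow_atTop_nhdsWithin_zero_of_lt_one (by norm_num)
      (by norm_num)), fun h => tendsto_nhdsGT_zero_of_tendsto_two_inv_pow
        (fun r hr => lineMeanOsc_nonneg f p v hr.le) (fun r s hr hrs hsr => ?_) h⟩
    exact lineMeanOsc_le_two_mul ((hline p).integrableOn_isCompact isCompact_Icc |>.mono_set
      Ioo_subset_Icc_self) hr hrs hsr
  rw [hdyadic]
  exact measurableSet_tendsto _ fun n => measurable_lineMeanOsc hf v _

end Measurability

lemma lineMeanOsc_one_eq_setAverage {h : ℝ → ℝ} {s r : ℝ} (hr : 0 < r) :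
    lineMeanOsc h s 1 r = ⨍ y in closedBall s r, ‖h y - h s‖ := by
  have htranslate :
      ∫ y in closedBall s r, ‖h y - h s‖ = ∫ t in Ioo (-r) r, |h (s + t) - h s| := by
    rw [← (measurePreserving_add_left volume s).setIntegral_preimage_emb
      (measurableEmbedding_addLeft s), preimage_add_left_closedBall, neg_add_cancel,
      Real.closedBall_eq_Icc, zero_sub, zero_add, integral_Icc_eq_integral_Ioo]
    rfl
  rw [setAverage_eq, Real.volume_real_closedBall hr.le, htranslate, smul_eq_mul, lineMeanOsc,
    one_div]
  simp only [smul_eq_mul, mul_one]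

lemma MeasureTheory.LocallyIntegrable.ae_isLineLebesguePoint {h : ℝ → ℝ}
    (hh : LocallyIntegrable h) : ∀ᵐ s, IsLineLebesguePoint h s 1 := by
  filter_upwards [IsUnifLocDoublingMeasure.ae_tendsto_average_norm_sub (μ := volume) hh 1]
    with s hs
  have hmem : ∀ᶠ r in 𝓝[>] (0 : ℝ), s ∈ closedBall s (1 * r) := by
    filter_upwards [self_mem_nhdsWithin] with r (hr : 0 < r)
    exact mem_closedBall_self (by linarith)
  refine (hs (fun _ => s) id tendsto_id hmem).congr' ?_
  filter_upwards [self_mem_nhdsWithin] with r (hr : 0 < r)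
  exact (lineMeanOsc_one_eq_setAverage hr).symm

section Lines

variable {E : Type*} [NormedAddCommGroup E] [NormedSpace ℝ E] [MeasurableSpace E]
  [BorelSpace E] [FiniteDimensional ℝ E] {μ : Measure E} [μ.IsAddHaarMeasure]

lemma ae_ae_add_smul_mem_iff {s : Set E} (hs : MeasurableSet s) (v : E) :
    (∀ᵐ p ∂μ, ∀ᵐ t : ℝ, p + t • v ∈ s) ↔ ∀ᵐ p ∂μ, p ∈ s :=
  ae_ae_add_linearMap_mem_iff (LinearMap.toSpanSingleton ℝ E v) volume μ hs

lemma ae_ae_add_smul_of_ae {P : E → Prop} (h : ∀ᵐ q ∂μ, P q) (v : E) :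
    ∀ᵐ p ∂μ, ∀ᵐ t : ℝ, P (p + t • v) := by
  obtain ⟨s, hs_ae, hs, hsP⟩ := h.exists_measurable_mem
  filter_upwards [(ae_ae_add_smul_mem_iff hs v).2 hs_ae] with p hp
  filter_upwards [hp] with t ht using hsP _ ht

lemma ae_isLineLebesguePoint_iff_of_ae_eq {f g : E → ℝ} (hfg : f =ᵐ[μ] g) (v : E) :
    ∀ᵐ p ∂μ, IsLineLebesguePoint f p v ↔ IsLineLebesguePoint g p v := by
  filter_upwards [hfg, ae_ae_add_smul_of_ae hfg v] with p hp hline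
  have hosc : lineMeanOsc f p v = lineMeanOsc g p v := by
    ext r
    simp only [lineMeanOsc, hp]
    congr 1
    refine integral_congr_ae (ae_restrict_of_ae ?_)
    filter_upwards [hline] with t ht
    rw [ht]
  rw [IsLineLebesguePoint, hosc, IsLineLebesguePoint]

theorem ae_isLineLebesguePoint_of_measurable {f : E → ℝ} (hf : Measurable f) (v : E)
    (hline : ∀ p, LocallyIntegrable (fun t : ℝ => f (p + t • v))) :
    ∀ᵐ p ∂μ, IsLineLebesguePoint f p v := by
  refine (ae_ae_add_smul_mem_iff (measurableSet_isLineLebesguePoint hf v hline) v).1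
    (ae_of_all _ fun p => ?_)
  filter_upwards [(hline p).ae_isLineLebesguePoint] with s hs
  rwa [IsLineLebesguePoint, lineMeanOsc_add_smul]

theorem ae_isLineLebesguePoint_of_ae_bounded {f : E → ℝ} (hf : AEMeasurable f μ) {C : ℝ}
    (hC : ∀ᵐ x ∂μ, |f x| ≤ C) (v : E) : ∀ᵐ p ∂μ, IsLineLebesguePoint f p v := by
  -- clamping makes the representative bounded everywhere, so that all of its lines are integrable
  set g : E → ℝ := fun x => max (-C) (min C (hf.mk f x))
  have hg : Measurable g := measurable_const.max (measurable_const.min hf.measurable_mk)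
  have hg_bound : ∀ x, ‖g x‖ ≤ |C| := fun x => abs_le.2
    ⟨(neg_le_neg (le_abs_self C)).trans (le_max_left _ _),
      max_le (neg_le_abs C) ((min_le_left _ _).trans (le_abs_self C))⟩
  have hfg : f =ᵐ[μ] g := by
    filter_upwards [hf.ae_eq_mk, hC] with x hx hCx
    obtain ⟨hlo, hhi⟩ := abs_le.1 hCx
    simp only [g, ← hx, min_eq_right hhi, max_eq_right hlo]
  have hline : ∀ p, LocallyIntegrable (fun t : ℝ => g (p + t • v)) := fun p =>
    (memLp_top_of_bound (hg.comp (by fun_prop)).aestronglyMeasurable |C|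
      (ae_of_all _ fun t => hg_bound _)).locallyIntegrable le_top
  filter_upwards [ae_isLineLebesguePoint_of_measurable hg v hline,
    ae_isLineLebesguePoint_iff_of_ae_eq hfg v] with p hp hiff
  exact hiff.2 hp

end Lines

section LocallyBounded

variable {E : Type*} [NormedAddCommGroup E] [NormedSpace ℝ E] [MeasurableSpace E]
  [BorelSpace E] [FiniteDimensional ℝ E] {μ : Measure E} [μ.IsAddHaarMeasure]

lemma ae_isLineLebesguePoint_of_mem_interior {f : E → ℝ} {K : Set E} (hK : IsCompact K)
    (hf : AEMeasurable f (μ.restrict K)) {C : ℝ} (hC : ∀ x ∈ K, |f x| ≤ C) (v : E) :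
    ∀ᵐ p ∂μ, p ∈ interior K → IsLineLebesguePoint f p v := by
  have hbound : ∀ x, |K.indicator f x| ≤ |C| := fun x => by
    by_cases hx : x ∈ K
    · simpa [hx] using (hC x hx).trans (le_abs_self C)
    · simp [hx]
  filter_upwards [ae_isLineLebesguePoint_of_ae_bounded
    ((aemeasurable_indicator_iff hK.measurableSet).2 hf) (ae_of_all _ hbound) v] with p hp hpK
  exact hp.congr_of_eventuallyEq <| Filter.eventually_of_mem (mem_interior_iff_mem_nhds.1 hpK)
    fun x hx => (indicator_of_mem hx f).symm

theorem ae_isLineLebesguePoint_of_locallyBounded {f : E → ℝ} {U : Set E} (hU : IsOpen U)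
    (hf : AEMeasurable f (μ.restrict U))
    (hbd : ∀ K ⊆ U, IsCompact K → ∃ C : ℝ, ∀ x ∈ K, |f x| ≤ C) {Γ : Set E} (hΓ : Γ.Countable) :
    ∀ᵐ p ∂μ, p ∈ U → ∀ v ∈ Γ, IsLineLebesguePoint f p v := by
  choose! K hK hpK hKU using fun p (hp : p ∈ U) => exists_compact_subset hU hp
  obtain ⟨T, hTU, hT, hcover⟩ := TopologicalSpace.countable_cover_nhdsWithin
    (f := fun p => interior (K p))
    fun p hp => mem_nhdsWithin_of_mem_nhds (isOpen_interior.mem_nhds (hpK p hp))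
  have hlocal : ∀ q ∈ T, ∀ v ∈ Γ, ∀ᵐ p ∂μ, p ∈ interior (K q) → IsLineLebesguePoint f p v :=
    fun q hq v _ => by
      obtain ⟨C, hC⟩ := hbd (K q) (hKU q (hTU hq)) (hK q (hTU hq))
      exact ae_isLineLebesguePoint_of_mem_interior (hK q (hTU hq))
        (hf.mono_measure (Measure.restrict_mono (hKU q (hTU hq)) le_rfl)) hC v
  filter_upwards [(ae_ball_iff hT).2 fun q hq => (ae_ball_iff hΓ).2 (hlocal q hq)]
    with p hp hpU v hv
  obtain ⟨q, hq, hpq⟩ := mem_iUnion₂.1 (hcover hpU)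
  exact hp q hq v hv hpq

end LocallyBounded

theorem lebesgue_point_along_lines_general
    (m : ℕ) (Ω : Set (EuclideanSpace ℝ (Fin m)))
    (f : EuclideanSpace ℝ (Fin m) → ℝ)
    (hmeas : NullMeasurable f (volume.restrict Ω))
    (hbd : ∀ K ⊆ Ω, IsCompact K → ∃ C : ℝ, ∀ x ∈ K, |f x| ≤ C)
    (Γ : Set (EuclideanSpace ℝ (Fin m))) (hΓc : Γ.Countable) :
    ∀ᵐ p ∂(volume.restrict Ω), ∀ γ' ∈ Γ, ∀ ε : ℝ, 0 < ε → ball p ε ⊆ Ω →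
      Tendsto (fun r : ℝ =>
          (1 / (2 * r)) * ∫ t in Set.Ioo (-r) r, |f (p + t • γ') - f p|)
        (nhdsWithin 0 (Set.Ioi 0)) (nhds 0) := by
  have hint := ae_isLineLebesguePoint_of_locallyBounded (μ := volume) isOpen_interior
    (hmeas.aemeasurable.mono_measure (Measure.restrict_mono interior_subset le_rfl))
    (fun K hK => hbd K (hK.trans interior_subset)) hΓc
  filter_upwards [ae_restrict_of_ae hint] with p hp γ' hγ' ε hε hball
  exact hp (mem_interior_iff_mem_nhds.2 (mem_of_superset (ball_mem_nhds p hε) hball)) γ' hγ'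

/-- For a Lebesgue measurable and locally bounded `f : Ω → ℝ` on an open `Ω ⊆ ℝ^m` and a
countable set `Γ ⊆ B_1(0)`, for a.e. `p ∈ Ω` and every `γ̇ ∈ Γ`, `t = 0` is a Lebesgue
point of `t ↦ f(p + t γ̇)`. -/
theorem lebesgue_point_along_lines
    (m : ℕ) (Ω : Set (EuclideanSpace ℝ (Fin m))) (hΩ : IsOpen Ω)
    (f : EuclideanSpace ℝ (Fin m) → ℝ)
    (hmeas : NullMeasurable f (volume.restrict Ω))
    (hbd : ∀ K ⊆ Ω, IsCompact K → ∃ C : ℝ, ∀ x ∈ K, |f x| ≤ C)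
    (Γ : Set (EuclideanSpace ℝ (Fin m))) (hΓc : Γ.Countable)
    (hΓ : Γ ⊆ ball (0 : EuclideanSpace ℝ (Fin m)) 1) :
    ∀ᵐ p ∂(volume.restrict Ω), ∀ γ' ∈ Γ, ∀ ε : ℝ, 0 < ε → ball p ε ⊆ Ω →
      Tendsto (fun r : ℝ =>
          (1 / (2 * r)) * ∫ t in Set.Ioo (-r) r, |f (p + t • γ') - f p|)
        (nhdsWithin 0 (Set.Ioi 0)) (nhds 0) :=
  lebesgue_point_along_lines_general m Ω f hmeas hbd Γ hΓc
end

section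
/- Let V ⊆ ℝ^m be open, let k : V → ℝ be locally integrable (k ∈ L¹_loc(V) with respect to Lebesgue measure), let w : V → ℝ be continuous, let θ > 0, and let Γ ⊆ B_θ(0) ⊆ ℝ^m be a countable set. For x with B_{4θ}(x) ⊆ V, δ ∈ (0, θ) ∩ ℚ, and γ̇ ∈ Γ, define F_{γ̇,δ,x} : (−1, 1) → ℝ by F_{γ̇,δ,x}(t) = (1 / L^m(closedBall(x, δ))) ∫_{closedBall(x, δ)} w(y + t γ̇) k(y + t γ̇) dL^m(y). Then for Lebesgue-almost every x ∈ {x ∈ V : B_{4θ}(x) ⊆ V} and all δ ∈ (0, θ) ∩ ℚ and γ̇ ∈ Γ, the point t = 0 is a Lebesgue point of F_{γ̇,δ,x}. -/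
open MeasureTheory Metric Filter Set Topology

/-!
The conclusion holds at every admissible `x`, not only almost everywhere. Translating by
`t • γ'`, `F t` is a normalized integral of the locally integrable function `w * k` over the
ball `closedBall (x + t • γ') δ`. Spheres are null for Lebesgue measure, so the indicators of
these balls converge almost everywhere as the centre moves, and dominated convergence makes
the ball integrals continuous in the centre. Hence `F` is continuous at `0`, and a point of
continuity is a Lebesgue point.
-/

theorem isClosed_setOf_ball_subset {X : Type*} [PseudoMetricSpace X] (V : Set X) (r : ℝ) :
    IsClosed {x | ball x r ⊆ V} := by
  have h : {x | ball x r ⊆ V} = ⋂ y ∈ Vᶜ, {x | r ≤ dist y x} := by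
    ext x
    simp [subset_def, not_imp_comm]
  rw [h]
  exact isClosed_biInter fun y _ =>
    isClosed_le continuous_const (continuous_const.dist continuous_id)

theorem setIntegral_closedBall_comp_add_right {G E : Type*} [NormedAddCommGroup G]
    [MeasurableSpace G] [MeasurableAdd G] (μ : Measure G) [μ.IsAddRightInvariant]
    [NormedAddCommGroup E] [NormedSpace ℝ E] (f : G → E) (x c : G) (δ : ℝ) :
    ∫ y in closedBall x δ, f (y + c) ∂μ = ∫ y in closedBall (x + c) δ, f y ∂μ := by
  have hpre : (· + c) ⁻¹' closedBall (x + c) δ = closedBall x δ := by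
    ext y
    simp [dist_eq_norm]
  rw [← hpre]
  exact (measurePreserving_add_right μ c).setIntegral_preimage_emb
    (measurableEmbedding_addRight c) f _

theorem continuousAt_indicator_closedBall_center {X M : Type*} [PseudoMetricSpace X] [Zero M]
    [TopologicalSpace M] (f : X → M) {y c₀ : X} {δ : ℝ} (hy : y ∉ sphere c₀ δ) :
    ContinuousAt (fun c => (closedBall c δ).indicator f y) c₀ := by
  have h : (fun c => (closedBall c δ).indicator f y) =
      (closedBall y δ).indicator fun _ => f y := by
    ext c
    simp [indicator, mem_closedBall, dist_comm]
  rw [h]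
  exact continuousOn_const.continuousAt_indicator fun hc =>
    hy (by simpa [dist_comm] using frontier_closedBall_subset_sphere hc)

section AddHaar

variable {E G : Type*} [NormedAddCommGroup E] [NormedSpace ℝ E] [MeasurableSpace E] [BorelSpace E]
  [FiniteDimensional ℝ E] {μ : Measure E} [μ.IsAddHaarMeasure]
  [NormedAddCommGroup G] [NormedSpace ℝ G] {g : E → G} {δ : ℝ}

theorem MeasureTheory.Integrable.continuous_setIntegral_closedBall (hg : Integrable g μ)
    (hδ : δ ≠ 0) :
    Continuous fun c => ∫ y in closedBall c δ, g y ∂μ := by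
  refine continuous_iff_continuousAt.2 fun c₀ => ?_
  simp_rw [← integral_indicator measurableSet_closedBall]
  refine continuousAt_of_dominated
    (Eventually.of_forall fun _ => (hg.indicator measurableSet_closedBall).aestronglyMeasurable)
    (Eventually.of_forall fun _ => Eventually.of_forall fun _ => norm_indicator_le_norm_self _ _)
    hg.norm ?_
  filter_upwards [measure_eq_zero_iff_ae_notMem.1 (Measure.addHaar_sphere_of_ne_zero μ c₀ hδ)]
    with y hy using continuousAt_indicator_closedBall_center g hy

theorem MeasureTheory.IntegrableOn.continuousAt_setIntegral_closedBall {c₀ : E} {R : ℝ}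
    (hg : IntegrableOn g (ball c₀ R) μ) (hδ : δ ≠ 0) (hδR : δ < R) :
    ContinuousAt (fun c => ∫ y in closedBall c δ, g y ∂μ) c₀ := by
  have hsub : ∀ᶠ c in 𝓝 c₀, closedBall c δ ⊆ ball c₀ R := by
    filter_upwards [ball_mem_nhds c₀ (sub_pos.2 hδR)] with c hc
    exact closedBall_subset_ball' (by rw [mem_ball] at hc; linarith)
  refine ((hg.integrable_indicator measurableSet_ball).continuous_setIntegral_closedBall
    hδ).continuousAt.congr ?_
  filter_upwards [hsub] with c hc
  rw [setIntegral_indicator measurableSet_ball, inter_eq_self_of_subset_left hc]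

end AddHaar

theorem ContinuousAt.tendsto_interval_average_abs_sub {F : ℝ → ℝ} {t₀ : ℝ}
    (hF : ContinuousAt F t₀) :
    Tendsto (fun r => (1 / (2 * r)) * ∫ t in Ioo (t₀ - r) (t₀ + r), |F t - F t₀|)
      (𝓝[>] 0) (𝓝 0) := by
  refine tendsto_order.2 ⟨fun a ha => ?_, fun ε hε => ?_⟩
  · filter_upwards [self_mem_nhdsWithin] with r (hr : 0 < r)
    exact ha.trans_le (by positivity)
  obtain ⟨η, hη, hFη⟩ := Metric.continuousAt_iff.1 hF (ε / 2) (half_pos hε)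
  filter_upwards [Ioo_mem_nhdsGT hη] with r ⟨hr, hrη⟩
  have hbound : ∫ t in Ioo (t₀ - r) (t₀ + r), |F t - F t₀| ≤ ε / 2 * (2 * r) := by
    have hclose : ∀ t ∈ Ioo (t₀ - r) (t₀ + r), ‖|F t - F t₀|‖ ≤ ε / 2 := by
      intro t ht
      rw [Real.norm_eq_abs, abs_abs, ← Real.dist_eq]
      exact (hFη (by rw [Real.dist_eq, abs_lt]; constructor <;> linarith [ht.1, ht.2])).le
    calc ∫ t in Ioo (t₀ - r) (t₀ + r), |F t - F t₀|
        ≤ ‖∫ t in Ioo (t₀ - r) (t₀ + r), |F t - F t₀|‖ := le_abs_self _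
      _ ≤ ε / 2 * volume.real (Ioo (t₀ - r) (t₀ + r)) :=
        norm_setIntegral_le_of_norm_le_const measure_Ioo_lt_top hclose
      _ = ε / 2 * (2 * r) := by rw [Real.volume_real_Ioo_of_le (by linarith)]; ring
  calc (1 / (2 * r)) * ∫ t in Ioo (t₀ - r) (t₀ + r), |F t - F t₀|
      ≤ (1 / (2 * r)) * (ε / 2 * (2 * r)) := by gcongr
    _ = ε / 2 := by field_simp
    _ < ε := half_lt_self hε

theorem lebesgue_point_of_averaged_maps_general
    (m : ℕ) (V : Set (EuclideanSpace ℝ (Fin m)))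
    (k w : EuclideanSpace ℝ (Fin m) → ℝ)
    (hk : LocallyIntegrableOn k V volume)
    (hw : ContinuousOn w V)
    (θ : ℝ)
    (Γ : Set (EuclideanSpace ℝ (Fin m))) :
    ∀ᵐ x ∂(volume.restrict {x : EuclideanSpace ℝ (Fin m) | ball x (4 * θ) ⊆ V}),
      ∀ δ : ℚ, 0 < (δ : ℝ) → (δ : ℝ) < θ → ∀ γ' ∈ Γ, ∀ F : ℝ → ℝ,
        (∀ t : ℝ, F t = (volume (closedBall x (δ : ℝ))).toReal⁻¹ *
            ∫ y in closedBall x (δ : ℝ), w (y + t • γ') * k (y + t • γ')) →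
        Tendsto (fun r : ℝ =>
            (1 / (2 * r)) * ∫ t in Set.Ioo (-r) r, |F t - F 0|)
          (nhdsWithin 0 (Set.Ioi 0)) (nhds 0) := by
  refine ae_restrict_of_forall_mem (isClosed_setOf_ball_subset V _).measurableSet ?_
  intro x hx δ hδ hδθ γ' _ F hF
  have hθ : closedBall x θ ⊆ V := (closedBall_subset_ball (by linarith)).trans hx
  have hwk : IntegrableOn (fun y => w y * k y) (ball x θ) volume :=
    ((hk.integrableOn_compact_subset hθ (isCompact_closedBall x θ)).continuousOn_mul
      (hw.mono hθ) (isCompact_closedBall x θ)).mono_set ball_subset_closedBall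
  have hF_eq : F = fun t => (volume (closedBall x (δ : ℝ))).toReal⁻¹ *
      ∫ y in closedBall (x + t • γ') (δ : ℝ), w y * k y := by
    ext t
    rw [hF, setIntegral_closedBall_comp_add_right volume (fun y => w y * k y)]
  have hF_cont : ContinuousAt F 0 := by
    rw [hF_eq]
    exact continuousAt_const.mul ((hwk.continuousAt_setIntegral_closedBall hδ.ne' hδθ).comp_of_eq
      (by fun_prop) (by simp))
  simpa using hF_cont.tendsto_interval_average_abs_sub

/-- For `k ∈ L¹_loc(V)`, `w` continuous, `θ > 0`, and a countable `Γ ⊆ B_θ(0)`: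
for a.e. `x` with `B_{4θ}(x) ⊆ V`, all rational `δ ∈ (0, θ)` and all `γ̇ ∈ Γ`, `t = 0` is
a Lebesgue point of
`F(t) = (1/L^m(closedBall x δ)) ∫_{closedBall x δ} w(y + tγ̇) k(y + tγ̇) dy`. -/
theorem lebesgue_point_of_averaged_maps
    (m : ℕ) (V : Set (EuclideanSpace ℝ (Fin m))) (hV : IsOpen V)
    (k w : EuclideanSpace ℝ (Fin m) → ℝ)
    (hk : LocallyIntegrableOn k V volume)
    (hw : ContinuousOn w V)
    (θ : ℝ) (hθ : 0 < θ)
    (Γ : Set (EuclideanSpace ℝ (Fin m))) (hΓc : Γ.Countable)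
    (hΓ : Γ ⊆ ball (0 : EuclideanSpace ℝ (Fin m)) θ) :
    ∀ᵐ x ∂(volume.restrict {x : EuclideanSpace ℝ (Fin m) | ball x (4 * θ) ⊆ V}),
      ∀ δ : ℚ, 0 < (δ : ℝ) → (δ : ℝ) < θ → ∀ γ' ∈ Γ, ∀ F : ℝ → ℝ,
        (∀ t : ℝ, F t = (volume (closedBall x (δ : ℝ))).toReal⁻¹ *
            ∫ y in closedBall x (δ : ℝ), w (y + t • γ') * k (y + t • γ')) →
        Tendsto (fun r : ℝ =>
            (1 / (2 * r)) * ∫ t in Set.Ioo (-r) r, |F t - F 0|)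
          (nhdsWithin 0 (Set.Ioi 0)) (nhds 0) :=
  lebesgue_point_of_averaged_maps_general m V k w hk hw θ Γ
end

section
/- Let U ⊆ ℝ^n be open, let v ∈ ℝ^n, and let f : U → ℝ be Lebesgue measurable, locally integrable, and nondecreasing in direction v, i.e., whenever y ∈ U, t ≥ 0, and the segment {y + r v : r ∈ [0, t]} lies in U, then f(y) ≤ f(y + t v). Let μ be a finite nonnegative Borel measure on U such that for every continuous function φ : U → ℝ with compact support in U, ∫_U φ dμ = lim_{h ↘ 0} ∫_U φ(y) (f(y + h v) − f(y)) / h dL^n(y). Let q ∈ U and δ, s > 0 be such that the set ⋃_{t ∈ [−2s, 2s]} (closedBall(q, δ) + t v) is contained in U. Then ∫_{−s}^{s} μ(closedBall(q, δ) + t v) dt ≥ ∫_{closedBall(q, δ)} (f(y + s v) − f(y − s v)) dL^n(y). -/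
/-!
Smearing a bump `ψ ≤ 1` supported in `closedBall q δ` along `v` gives the test function
`φ = ∫_{-s}^{s} ψ (· - t • v) dt`, whose derivative in direction `-v` is
`ψ (· - s • v) - ψ (· + s • v)`. Moving the difference quotients from `f` onto `φ` by translation
invariance of Lebesgue measure, the defining limit of `μ` gives
`∫ φ dμ = ∫ ψ y (f (y + s • v) - f (y - s • v)) dy`, while Fubini and `ψ ≤ 1` bound `∫ φ dμ` by
`∫_{-s}^{s} μ (closedBall (q + t • v) δ) dt`. Letting `ψ` increase to the indicator of the open
ball, whose boundary sphere is Lebesgue-null, gives the inequality.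
-/

open MeasureTheory Metric Set Filter Topology
open scoped Pointwise

lemma hasDerivAt_intervalIntegral_comp_add_right {g : ℝ → ℝ} (hg : Continuous g) (a b x : ℝ) :
    HasDerivAt (fun h => ∫ t in a..b, g (t + h)) (g (x + b) - g (x + a)) x := by
  have hprim : ∀ u, HasDerivAt (fun u => ∫ t in (0 : ℝ)..u, g t) (g u) u := fun u =>
    (hg.integral_hasStrictDerivAt 0 u).hasDerivAt
  have hsplit : (fun h => ∫ t in a..b, g (t + h)) =
      fun h => (∫ t in (0 : ℝ)..h + b, g t) - ∫ t in (0 : ℝ)..h + a, g t := by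
    funext h
    rw [intervalIntegral.integral_comp_add_right, add_comm a, add_comm b,
      intervalIntegral.integral_interval_sub_left (hg.intervalIntegrable _ _)
        (hg.intervalIntegrable _ _)]
  rw [hsplit]
  exact ((hprim (x + b)).comp_add_const x b).fun_sub ((hprim (x + a)).comp_add_const x a)

lemma abs_intervalIntegral_comp_add_right_sub_le {g : ℝ → ℝ} {C : ℝ} (hg : Continuous g)
    (hC : ∀ t, |g t| ≤ C) (a b h : ℝ) :
    |(∫ t in a..b, g (t + h)) - ∫ t in a..b, g t| ≤ 2 * C * |h| := by
  have := Convex.norm_image_sub_le_of_norm_hasDerivWithin_le (s := univ) (x := 0) (y := h)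
    (C := 2 * C)
    (fun x _ => (hasDerivAt_intervalIntegral_comp_add_right hg a b x).hasDerivWithinAt)
    (fun x _ => (abs_sub _ _).trans (by linarith [hC (x + b), hC (x + a)]))
    convex_univ (mem_univ _) (mem_univ _)
  simpa using this

lemma sub_mem_closedBall_iff {E : Type*} [SeminormedAddCommGroup E] {q y w : E} {δ : ℝ} :
    y - w ∈ closedBall q δ ↔ y ∈ closedBall (q + w) δ := by
  rw [mem_closedBall, mem_closedBall, ← dist_sub_right y (q + w) w, add_sub_cancel_right]

section Sweep

variable {E : Type*} [NormedAddCommGroup E] [NormedSpace ℝ E]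

lemma mem_add_image_smul_iff {A : Set E} {I : Set ℝ} {v y : E} :
    y ∈ A + (fun t : ℝ => t • v) '' I ↔ ∃ t ∈ I, y - t • v ∈ A := by
  constructor
  · rintro ⟨a, ha, _, ⟨t, ht, rfl⟩, rfl⟩
    exact ⟨t, ht, by simpa using ha⟩
  · rintro ⟨t, ht, hy⟩
    exact ⟨y - t • v, hy, t • v, ⟨t, ht, rfl⟩, sub_add_cancel _ _⟩

lemma IsCompact.add_image_smul {A : Set E} {I : Set ℝ} (hA : IsCompact A) (hI : IsCompact I)
    (v : E) : IsCompact (A + (fun t : ℝ => t • v) '' I) :=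
  hA.add (hI.image (by fun_prop))

noncomputable def sweep (ψ : E → ℝ) (v : E) (s : ℝ) (y : E) : ℝ :=
  ∫ t in -s..s, ψ (y - t • v)

variable {ψ : E → ℝ} {v : E} {s : ℝ}

lemma sweep_sub_smul (y : E) (h : ℝ) :
    sweep ψ v s (y - h • v) = ∫ t in -s..s, ψ (y - (t + h) • v) := by
  simp only [sweep, add_smul, sub_sub, add_comm (h • v)]

lemma continuous_sweep (hψ : Continuous ψ) : Continuous (sweep ψ v s) :=
  intervalIntegral.continuous_parametric_intervalIntegral_of_continuous' (by fun_prop) _ _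

lemma hasDerivAt_sweep_sub_smul (hψ : Continuous ψ) (y : E) (h : ℝ) :
    HasDerivAt (fun h => sweep ψ v s (y - h • v))
      (ψ (y - (h + s) • v) - ψ (y - (h + -s) • v)) h := by
  simp_rw [sweep_sub_smul]
  exact hasDerivAt_intervalIntegral_comp_add_right (g := fun t => ψ (y - t • v)) (by fun_prop) _ _ h

lemma tendsto_slope_sweep (hψ : Continuous ψ) (y : E) :
    Tendsto (fun h => (sweep ψ v s (y - h • v) - sweep ψ v s y) / h) (𝓝[≠] 0)
      (𝓝 (ψ (y - s • v) - ψ (y + s • v))) := by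
  have := hasDerivAt_iff_tendsto_slope_zero.1 (hasDerivAt_sweep_sub_smul (v := v) (s := s) hψ y 0)
  simpa [div_eq_inv_mul, neg_smul, sub_neg_eq_add] using this

lemma abs_sweep_sub_smul_sub_le {C : ℝ} (hψ : Continuous ψ) (hC : ∀ y, |ψ y| ≤ C) (y : E)
    (h : ℝ) : |sweep ψ v s (y - h • v) - sweep ψ v s y| ≤ 2 * C * |h| := by
  have := abs_intervalIntegral_comp_add_right_sub_le (g := fun t => ψ (y - t • v))
    (by fun_prop) (fun t => hC _) (-s) s h
  rwa [← sweep_sub_smul] at this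

lemma support_sweep_subset :
    Function.support (sweep ψ v s) ⊆
      Function.support ψ + (fun t : ℝ => t • v) '' uIcc (-s) s := by
  intro y hy
  by_contra hyA
  refine hy ((intervalIntegral.integral_congr fun t ht => ?_).trans intervalIntegral.integral_zero)
  exact Function.notMem_support.1 fun h => hyA (mem_add_image_smul_iff.2 ⟨t, ht, h⟩)

lemma HasCompactSupport.sweep (hψ : HasCompactSupport ψ) : HasCompactSupport (sweep ψ v s) :=
  .of_support_subset_isCompact (hψ.isCompact.add_image_smul isCompact_uIcc v)
    (support_sweep_subset.trans (add_subset_add_right (subset_tsupport ψ)))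

end Sweep

section Translation

variable {E : Type*} [NormedAddCommGroup E] [MeasurableSpace E] [BorelSpace E]
  {ν : Measure E} [ν.IsAddRightInvariant]

lemma integral_mul_comp_add_right (φ F : E → ℝ) (w : E) :
    ∫ y, φ y * F (y + w) ∂ν = ∫ y, φ (y - w) * F y ∂ν := by
  rw [← integral_add_right_eq_self (fun y => φ (y - w) * F y) w]
  simp

lemma integral_mul_sub_comp_add_right {φ F : E → ℝ} (hF : Integrable F ν) (hφ : Continuous φ)
    (hφc : HasCompactSupport φ) (a b : E) :
    ∫ y, φ y * (F (y + a) - F (y + b)) ∂ν = ∫ y, (φ (y - a) - φ (y - b)) * F y ∂ν := by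
  obtain ⟨C, hC⟩ := hφ.bounded_above_of_compact_support hφc
  have hint : ∀ w, Integrable (fun y => φ y * F (y + w)) ν := fun w =>
    (hF.comp_add_right w).bdd_mul hφ.aestronglyMeasurable (ae_of_all _ hC)
  have hint' : ∀ w, Integrable (fun y => φ (y - w) * F y) ν := fun w =>
    hF.bdd_mul (hφ.comp (continuous_sub_right w)).aestronglyMeasurable (ae_of_all _ fun y => hC _)
  simp only [mul_sub, sub_mul]
  rw [integral_sub (hint a) (hint b), integral_sub (hint' a) (hint' b),
    integral_mul_comp_add_right, integral_mul_comp_add_right]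

lemma MeasureTheory.IntegrableOn.comp_add_right {f : E → ℝ} {S : Set E}
    (hf : IntegrableOn f S ν) (w : E) :
    IntegrableOn (fun y => f (y + w)) ((· + w) ⁻¹' S) ν :=
  ((measurePreserving_add_right ν w).integrableOn_comp_preimage
    (MeasurableEquiv.addRight w).measurableEmbedding).2 hf

end Translation

lemma tendsto_integral_mul_of_tendsto {α ι : Type*} [MeasurableSpace α] {μ : Measure α}
    {l : Filter ι} [l.IsCountablyGenerated] {F Φ₀ : α → ℝ} {Φ : ι → α → ℝ} {C : ℝ}
    (hF : Integrable F μ) (hΦm : ∀ᶠ i in l, AEStronglyMeasurable (Φ i) μ)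
    (hΦb : ∀ᶠ i in l, ∀ y, |Φ i y| ≤ C)
    (hlim : ∀ᵐ y ∂μ, Tendsto (fun i => Φ i y) l (𝓝 (Φ₀ y))) :
    Tendsto (fun i => ∫ y, Φ i y * F y ∂μ) l (𝓝 (∫ y, Φ₀ y * F y ∂μ)) := by
  refine tendsto_integral_filter_of_dominated_convergence (fun y => C * |F y|)
    (hΦm.mono fun i hi => hi.mul hF.aestronglyMeasurable)
    (hΦb.mono fun i hi => ae_of_all _ fun y => ?_) (hF.abs.const_mul C)
    (hlim.mono fun y hy => hy.mul_const (F y))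
  rw [Real.norm_eq_abs, abs_mul]
  exact mul_le_mul_of_nonneg_right (hi y) (abs_nonneg _)

section WeakLineDeriv

variable {E : Type*} [NormedAddCommGroup E] [NormedSpace ℝ E] [MeasurableSpace E] [BorelSpace E]
  {ν : Measure E} [ν.IsAddRightInvariant] {ψ : E → ℝ} {v : E} {s : ℝ}

lemma tendsto_integral_sweep_mul_slope {F : E → ℝ} (hF : Integrable F ν) (hψ : Continuous ψ)
    (hψc : HasCompactSupport ψ) :
    Tendsto (fun h : ℝ => ∫ y, sweep ψ v s y * ((F (y + h • v) - F y) / h) ∂ν) (𝓝[>] 0)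
      (𝓝 (∫ y, ψ y * (F (y + s • v) - F (y - s • v)) ∂ν)) := by
  have hquot : ∀ h : ℝ, ∫ y, sweep ψ v s y * ((F (y + h • v) - F y) / h) ∂ν =
      ∫ y, ((sweep ψ v s (y - h • v) - sweep ψ v s y) / h) * F y ∂ν := fun h => by
    have := integral_mul_sub_comp_add_right hF (continuous_sweep hψ) (hψc.sweep (v := v) (s := s))
      (h • v) 0
    simp only [add_zero, sub_zero] at this
    simp only [← mul_div_assoc, div_mul_eq_mul_div, integral_div, this]
  have hlhs : ∫ y, ψ y * (F (y + s • v) - F (y - s • v)) ∂ν =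
      ∫ y, (ψ (y - s • v) - ψ (y + s • v)) * F y ∂ν := by
    simpa [← sub_eq_add_neg] using integral_mul_sub_comp_add_right hF hψ hψc (s • v) (-(s • v))
  obtain ⟨C, hC⟩ := hψ.bounded_above_of_compact_support hψc
  simp only [hquot, hlhs]
  refine tendsto_integral_mul_of_tendsto (C := 2 * C) hF (Eventually.of_forall fun h => ?_) ?_
    (ae_of_all _ fun y => (tendsto_slope_sweep hψ y).mono_left (nhdsGT_le_nhdsNE 0))
  · exact (((continuous_sweep hψ).comp (continuous_sub_right _)).sub
      (continuous_sweep hψ)).div_const h |>.aestronglyMeasurable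
  · filter_upwards [self_mem_nhdsWithin] with h (hh : 0 < h) y
    rw [abs_div, div_le_iff₀ (abs_pos.2 hh.ne')]
    exact abs_sweep_sub_smul_sub_le hψ hC y h

/-- `μ = ∂_v f` on `U` in the sense of distributions, with continuous test functions. -/
def IsWeakLineDeriv (ν : Measure E) (f : E → ℝ) (v : E) (U : Set E) (μ : Measure E) : Prop :=
  ∀ φ : E → ℝ, Continuous φ → HasCompactSupport φ → tsupport φ ⊆ U →
    Tendsto (fun h : ℝ => ∫ y, φ y * ((f (y + h • v) - f y) / h) ∂ν) (𝓝[>] 0)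
      (𝓝 (∫ y, φ y ∂μ))

theorem IsWeakLineDeriv.integral_mul_sub_eq_integral_sweep {f : E → ℝ} {U B : Set E}
    {μ : Measure E} (hd : IsWeakLineDeriv ν f v U μ) (hB : IsCompact B) (hs : 0 < s)
    (hKU : B + (fun t : ℝ => t • v) '' Icc (-(2 * s)) (2 * s) ⊆ U)
    (hf : IntegrableOn f (B + (fun t : ℝ => t • v) '' Icc (-(2 * s)) (2 * s)) ν)
    (hψ : Continuous ψ) (hψB : Function.support ψ ⊆ B) :
    ∫ y, ψ y * (f (y + s • v) - f (y - s • v)) ∂ν = ∫ y, sweep ψ v s y ∂μ := by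
  set K := B + (fun t : ℝ => t • v) '' Icc (-(2 * s)) (2 * s)
  have hK : IsCompact K := hB.add_image_smul isCompact_Icc v
  have hF : Integrable (K.indicator f) ν := (integrable_indicator_iff hK.measurableSet).2 hf
  have hψc : HasCompactSupport ψ := .of_support_subset_isCompact hB hψB
  have hBK : ∀ y ∈ B, ∀ t ∈ Icc (-(2 * s)) (2 * s), y + t • v ∈ K :=
    fun y hy t ht => mem_add_image_smul_iff.2 ⟨t, ht, by simpa using hy⟩
  have hφK : ∀ y ∈ Function.support (sweep ψ v s), ∀ h ∈ Icc 0 s, y + h • v ∈ K := by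
    intro y hy h hh
    obtain ⟨t, ht, hyt⟩ := mem_add_image_smul_iff.1 (support_sweep_subset hy)
    rw [uIcc_of_le (by linarith)] at ht
    convert hBK _ (hψB hyt) (t + h) ⟨by linarith [ht.1, hh.1], by linarith [ht.2, hh.2]⟩ using 1
    module
  have hφU : tsupport (sweep ψ v s) ⊆ U :=
    (closure_minimal (fun y hy => by simpa using hφK y hy 0 ⟨le_rfl, hs.le⟩) hK.isClosed).trans hKU
  have hlhs : ∫ y, ψ y * (f (y + s • v) - f (y - s • v)) ∂ν =
      ∫ y, ψ y * (K.indicator f (y + s • v) - K.indicator f (y - s • v)) ∂ν := by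
    congr 1 with y
    by_cases hy : ψ y = 0
    · simp [hy]
    have hminus := hBK y (hψB hy) (-s) ⟨by linarith, by linarith⟩
    rw [neg_smul, ← sub_eq_add_neg] at hminus
    rw [indicator_of_mem (hBK y (hψB hy) s ⟨by linarith, by linarith⟩), indicator_of_mem hminus]
  have hquot : ∀ h ∈ Ioc 0 s, ∫ y, sweep ψ v s y * ((f (y + h • v) - f y) / h) ∂ν =
      ∫ y, sweep ψ v s y * ((K.indicator f (y + h • v) - K.indicator f y) / h) ∂ν := by
    intro h hh
    congr 1 with y
    by_cases hy : sweep ψ v s y = 0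
    · simp [hy]
    rw [indicator_of_mem (hφK y hy h ⟨hh.1.le, hh.2⟩),
      indicator_of_mem (by simpa using hφK y hy 0 ⟨le_rfl, hs.le⟩)]
  rw [hlhs]
  refine tendsto_nhds_unique ((tendsto_integral_sweep_mul_slope hF hψ hψc).congr' ?_)
    (hd _ (continuous_sweep hψ) hψc.sweep hφU)
  filter_upwards [Ioc_mem_nhdsGT hs] with h hh
  exact (hquot h hh).symm

end WeakLineDeriv

theorem integral_sweep_le_integral_measureReal_closedBall {E : Type*} [NormedAddCommGroup E]
    [NormedSpace ℝ E] [ProperSpace E] [MeasurableSpace E] [BorelSpace E] {μ : Measure E}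
    [IsFiniteMeasure μ] {ψ : E → ℝ} {v q : E} {δ s : ℝ} (hψ : Continuous ψ) (hψ1 : ψ ≤ 1)
    (hψB : Function.support ψ ⊆ closedBall q δ) (hs : 0 ≤ s) :
    ∫ y, sweep ψ v s y ∂μ ≤ ∫ t in Icc (-s) s, μ.real (closedBall (q + t • v) δ) := by
  obtain ⟨C, hC⟩ := hψ.bounded_above_of_compact_support
    (HasCompactSupport.of_support_subset_isCompact (isCompact_closedBall q δ) hψB)
  have : IsFiniteMeasure (volume.restrict (Ioc (-s) s)) :=
    isFiniteMeasure_restrict.2 measure_Ioc_lt_top.ne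
  have hint : Integrable (fun p : E × ℝ => ψ (p.1 - p.2 • v))
      (μ.prod (volume.restrict (Ioc (-s) s))) :=
    (integrable_const C).mono' (by fun_prop) (ae_of_all _ fun p => hC _)
  have hball : ∀ t : ℝ, ∫ y, ψ (y - t • v) ∂μ ≤ μ.real (closedBall (q + t • v) δ) := by
    intro t
    rw [← integral_indicator_one measurableSet_closedBall]
    refine integral_mono ((integrable_const C).mono' (by fun_prop) (ae_of_all _ fun y => hC _))
      ((integrable_const 1).indicator measurableSet_closedBall) fun y => ?_
    by_cases hy : y ∈ closedBall (q + t • v) δ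
    · simpa [indicator_of_mem hy] using hψ1 (y - t • v)
    · rw [indicator_of_notMem hy,
        Function.notMem_support.1 fun h => hy (sub_mem_closedBall_iff.1 (hψB h))]
  have hmeas : Measurable fun t : ℝ => μ (closedBall (q + t • v) δ) :=
    measurable_measure_prodMk_left
      (isClosed_le (f := fun p : ℝ × E => dist p.2 (q + p.1 • v)) (by fun_prop)
        continuous_const).measurableSet
  have hint' : Integrable (fun t : ℝ => μ.real (closedBall (q + t • v) δ))
      (volume.restrict (Ioc (-s) s)) :=
    (integrable_const (μ.real univ)).mono' hmeas.ennreal_toReal.aestronglyMeasurable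
      (ae_of_all _ fun t => by
        simpa [abs_of_nonneg measureReal_nonneg] using
          measureReal_mono (μ := μ) (subset_univ (closedBall (q + t • v) δ)))
  calc ∫ y, sweep ψ v s y ∂μ = ∫ y, (∫ t in Ioc (-s) s, ψ (y - t • v)) ∂μ := by
        simp only [sweep, intervalIntegral.integral_of_le (neg_le_self hs)]
    _ = ∫ t in Ioc (-s) s, (∫ y, ψ (y - t • v) ∂μ) :=
        integral_integral_swap (f := fun y t => ψ (y - t • v)) hint
    _ ≤ ∫ t in Ioc (-s) s, μ.real (closedBall (q + t • v) δ) :=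
        integral_mono hint.integral_prod_right hint' hball
    _ = _ := integral_Icc_eq_integral_Ioc.symm

section BallBump

variable {X : Type*} [PseudoMetricSpace X] {q y : X} {δ : ℝ} {k : ℕ}

noncomputable def ballBump (q : X) (δ : ℝ) (k : ℕ) (y : X) : ℝ :=
  max 0 (min 1 (k * (δ - dist y q)))

lemma continuous_ballBump : Continuous (ballBump q δ k) := by
  unfold ballBump
  fun_prop

lemma ballBump_le_one : ballBump q δ k ≤ 1 := fun _ => max_le zero_le_one (min_le_left _ _)

lemma support_ballBump_subset : Function.support (ballBump q δ k) ⊆ ball q δ := by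
  intro y hy
  by_contra hyq
  have hneg : (k : ℝ) * (δ - dist y q) ≤ 0 :=
    mul_nonpos_of_nonneg_of_nonpos k.cast_nonneg (by linarith [not_lt.1 (mt mem_ball.2 hyq)])
  exact hy (max_eq_left ((min_le_right _ _).trans hneg))

lemma tendsto_ballBump (hy : y ∈ ball q δ) :
    Tendsto (fun k : ℕ => ballBump q δ k y) atTop (𝓝 1) := by
  have hpos : 0 < δ - dist y q := sub_pos.2 hy
  obtain ⟨k₀, hk₀⟩ := exists_nat_gt (1 / (δ - dist y q))
  refine tendsto_const_nhds.congr' (eventually_atTop.2 ⟨k₀, fun k hk => ?_⟩)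
  have hk : (k₀ : ℝ) ≤ k := Nat.cast_le.2 hk
  have : 1 ≤ (k : ℝ) * (δ - dist y q) := by
    rw [div_lt_iff₀ hpos] at hk₀
    nlinarith
  simp [ballBump, min_eq_left this]

end BallBump

lemma closedBall_ae_eq_ball {E : Type*} [NormedAddCommGroup E] [NormedSpace ℝ E]
    [FiniteDimensional ℝ E] [MeasurableSpace E] [BorelSpace E] (μ : Measure E)
    [μ.IsAddHaarMeasure] (x : E) {r : ℝ} (hr : r ≠ 0) : closedBall x r =ᵐ[μ] ball x r := by
  refine ae_eq_set.2 ⟨?_, by simp [sdiff_eq_empty.2 ball_subset_closedBall]⟩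
  rw [closedBall_sdiff_ball]
  exact Measure.addHaar_sphere_of_ne_zero μ x hr

lemma tendsto_integral_ballBump_mul {E : Type*} [NormedAddCommGroup E] [NormedSpace ℝ E]
    [FiniteDimensional ℝ E] [MeasurableSpace E] [BorelSpace E] {μ : Measure E}
    [μ.IsAddHaarMeasure] {g : E → ℝ} {q : E} {δ : ℝ} (hδ : 0 < δ)
    (hg : IntegrableOn g (closedBall q δ) μ) :
    Tendsto (fun k : ℕ => ∫ y, ballBump q δ k y * g y ∂μ) atTop
      (𝓝 (∫ y in closedBall q δ, g y ∂μ)) := by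
  have hae : ∀ᵐ y ∂μ.restrict (closedBall q δ), y ∈ ball q δ := by
    rw [Measure.restrict_congr_set (closedBall_ae_eq_ball μ q hδ.ne')]
    exact ae_restrict_mem measurableSet_ball
  have := tendsto_integral_mul_of_tendsto (C := 1) hg
    (Eventually.of_forall fun k => continuous_ballBump.aestronglyMeasurable)
    (Eventually.of_forall fun k y =>
      abs_le.2 ⟨(neg_nonpos.2 zero_le_one).trans (le_max_left _ _), ballBump_le_one y⟩)
    (hae.mono fun y hy => tendsto_ballBump hy)
  simp only [one_mul] at this
  refine this.congr fun k => setIntegral_eq_integral_of_forall_compl_eq_zero fun y hy => ?_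
  rw [Function.notMem_support.1 fun h => hy (ball_subset_closedBall (support_ballBump_subset h)),
    zero_mul]

theorem fundamental_thm_of_calculus_for_measure_general
    (n : ℕ) (U : Set (EuclideanSpace ℝ (Fin n)))
    (v : EuclideanSpace ℝ (Fin n)) (f : EuclideanSpace ℝ (Fin n) → ℝ)
    (hloc : LocallyIntegrableOn f U volume)
    (μ : Measure (EuclideanSpace ℝ (Fin n))) [IsFiniteMeasure μ]
    (hweak : ∀ φ : EuclideanSpace ℝ (Fin n) → ℝ, Continuous φ → HasCompactSupport φ →
      tsupport φ ⊆ U →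
      Tendsto (fun h : ℝ => ∫ y, φ y * ((f (y + h • v) - f y) / h))
        (nhdsWithin 0 (Ioi 0)) (nhds (∫ y, φ y ∂μ)))
    (q : EuclideanSpace ℝ (Fin n)) (δ s : ℝ) (hδ : 0 < δ) (hs : 0 < s)
    (hsub : ∀ t ∈ Icc (-(2 * s)) (2 * s), closedBall (q + t • v) δ ⊆ U) :
    ∫ y in closedBall q δ, (f (y + s • v) - f (y - s • v)) ≤
      ∫ t in Icc (-s) s, (μ (closedBall (q + t • v) δ)).toReal := by
  set K := closedBall q δ + (fun t : ℝ => t • v) '' Icc (-(2 * s)) (2 * s)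
  have hKU : K ⊆ U := fun y hy => by
    obtain ⟨t, ht, hyt⟩ := mem_add_image_smul_iff.1 hy
    exact hsub t ht (sub_mem_closedBall_iff.1 hyt)
  have hf : IntegrableOn f K volume :=
    hloc.integrableOn_compact_subset hKU ((isCompact_closedBall q δ).add_image_smul isCompact_Icc v)
  have hbound : ∀ k : ℕ, ∫ y, ballBump q δ k y * (f (y + s • v) - f (y - s • v)) ≤
      ∫ t in Icc (-s) s, μ.real (closedBall (q + t • v) δ) := fun k => by
    have hsupp : Function.support (ballBump q δ k) ⊆ closedBall q δ :=
      support_ballBump_subset.trans ball_subset_closedBall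
    rw [IsWeakLineDeriv.integral_mul_sub_eq_integral_sweep hweak (isCompact_closedBall q δ) hs
      hKU hf continuous_ballBump hsupp]
    exact integral_sweep_le_integral_measureReal_closedBall continuous_ballBump ballBump_le_one
      hsupp hs.le
  have hshift : ∀ t ∈ Icc (-(2 * s)) (2 * s), closedBall q δ ⊆ (· + t • v) ⁻¹' K :=
    fun t ht y hy => mem_add_image_smul_iff.2 ⟨t, ht, by simpa using hy⟩
  have hg : IntegrableOn (fun y => f (y + s • v) - f (y - s • v)) (closedBall q δ) volume := by
    have hplus := (hf.comp_add_right (s • v)).mono_set (hshift s ⟨by linarith, by linarith⟩)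
    have hminus := (hf.comp_add_right ((-s) • v)).mono_set (hshift (-s) ⟨by linarith, by linarith⟩)
    simp only [neg_smul, ← sub_eq_add_neg] at hminus
    exact hplus.sub hminus
  exact le_of_tendsto' (tendsto_integral_ballBump_mul hδ hg) hbound

/-- A fundamental-theorem-of-calculus type inequality for the distributional directional
derivative measure `μ` of a function `f` that is nondecreasing in direction `v`. -/
theorem fundamental_thm_of_calculus_for_measure
    (n : ℕ) (U : Set (EuclideanSpace ℝ (Fin n))) (hU : IsOpen U)
    (v : EuclideanSpace ℝ (Fin n)) (f : EuclideanSpace ℝ (Fin n) → ℝ)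
    (hmeas : AEMeasurable f (volume.restrict U))
    (hloc : LocallyIntegrableOn f U volume)
    (hmono : ∀ y ∈ U, ∀ t : ℝ, 0 ≤ t → (∀ r ∈ Icc (0 : ℝ) t, y + r • v ∈ U) →
      f y ≤ f (y + t • v))
    (μ : Measure (EuclideanSpace ℝ (Fin n))) [IsFiniteMeasure μ]
    (hweak : ∀ φ : EuclideanSpace ℝ (Fin n) → ℝ, Continuous φ → HasCompactSupport φ →
      tsupport φ ⊆ U →
      Tendsto (fun h : ℝ => ∫ y, φ y * ((f (y + h • v) - f y) / h))
        (nhdsWithin 0 (Ioi 0)) (nhds (∫ y, φ y ∂μ)))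
    (q : EuclideanSpace ℝ (Fin n)) (δ s : ℝ) (hδ : 0 < δ) (hs : 0 < s)
    (hsub : ∀ t ∈ Icc (-(2 * s)) (2 * s), closedBall (q + t • v) δ ⊆ U) :
    ∫ y in closedBall q δ, (f (y + s • v) - f (y - s • v)) ≤
      ∫ t in Icc (-s) s, (μ (closedBall (q + t • v) δ)).toReal :=
  fundamental_thm_of_calculus_for_measure_general n U v f hloc μ hweak q δ s hδ hs hsub
end

section
/- Let γ : [0, 1] → ℝ^n be Lipschitz continuous such that each coordinate function t ↦ γ(t)_i is nondecreasing (i = 1, …, n) and Σ_{i=1}^n (γ(1)_i − γ(0)_i) = 1. Define f : [0, 1] → [0, 1] by f(t) = Σ_{i=1}^n (γ(t)_i − γ(0)_i), and define γ̃ : [0, 1] → ℝ^n by γ̃(τ) = γ(sup{σ ∈ [0, 1] : f(σ) ≤ τ}). Then: (i) γ̃(0) = γ(0) and γ̃(1) = γ(1); (ii) γ = γ̃ ∘ f on [0, 1]; (iii) for all 0 ≤ τ₁ ≤ τ₂ ≤ 1 one has Σ_{i=1}^n |γ̃(τ₂)_i − γ̃(τ₁)_i| = τ₂ − τ₁, i.e.,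 γ̃ has unit speed with respect to the ℓ¹-norm on ℝ^n; in particular each coordinate of γ̃ is nondecreasing, γ̃ is Lipschitz, and γ̃ is bi-Lipschitz onto its image with respect to the Euclidean metric. -/
open Set Finset

/-!
The reparametrising function `f` is the `ℓ¹` arc length of `γ`: since the coordinates are
nondecreasing, `Σᵢ |γ(t)ᵢ − γ(s)ᵢ| = f(t) − f(s)` for `s ≤ t`. In particular `γ` is constant on
every fibre of `f`, so `γ = γ̃ ∘ f` no matter which point of the fibre the supremum picks. By
continuity and the intermediate value theorem `f(sup{σ : f(σ) ≤ τ}) = τ`, hence the arc length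
of `γ̃` between `τ₁` and `τ₂` is `τ₂ − τ₁`. Bi-Lipschitz bounds follow from comparing the `ℓ¹`
and `ℓ²` norms on `ℝⁿ`.
-/

noncomputable def upperInverse (f : ℝ → ℝ) (a b τ : ℝ) : ℝ :=
  sSup {σ ∈ Icc a b | f σ ≤ τ}

section UpperInverse

variable {f : ℝ → ℝ} {a b t τ : ℝ}

lemma bddAbove_sublevel_Icc : BddAbove {σ ∈ Icc a b | f σ ≤ τ} :=
  ⟨b, fun _ hσ => hσ.1.2⟩

lemma le_upperInverse (ht : t ∈ Icc a b) (hτ : f t ≤ τ) : t ≤ upperInverse f a b τ :=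
  le_csSup bddAbove_sublevel_Icc ⟨ht, hτ⟩

lemma mapsTo_upperInverse (hab : a ≤ b) : MapsTo (upperInverse f a b) (Ici (f a)) (Icc a b) :=
  fun _ hτ => ⟨le_upperInverse (left_mem_Icc.2 hab) hτ,
    csSup_le ⟨a, left_mem_Icc.2 hab, hτ⟩ fun _ hσ => hσ.1.2⟩

lemma monotoneOn_upperInverse (hab : a ≤ b) : MonotoneOn (upperInverse f a b) (Ici (f a)) :=
  fun _ hτ₁ _ _ h => csSup_le_csSup bddAbove_sublevel_Icc ⟨a, left_mem_Icc.2 hab, hτ₁⟩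
    fun _ hσ => ⟨hσ.1, hσ.2.trans h⟩

lemma apply_upperInverse_le (hab : a ≤ b) (hf : ContinuousOn f (Icc a b)) (hτ : f a ≤ τ) :
    f (upperInverse f a b τ) ≤ τ :=
  ((hf.preimage_isClosed_of_isClosed isClosed_Icc isClosed_Iic).csSup_mem
    ⟨a, left_mem_Icc.2 hab, hτ⟩ bddAbove_sublevel_Icc).2

lemma apply_upperInverse (hab : a ≤ b) (hf : ContinuousOn f (Icc a b))
    (hmono : MonotoneOn f (Icc a b)) (hτ : τ ∈ Icc (f a) (f b)) :
    f (upperInverse f a b τ) = τ := by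
  obtain ⟨t, ht, rfl⟩ := intermediate_value_Icc hab hf hτ
  exact le_antisymm (apply_upperInverse_le hab hf hτ.1)
    (hmono ht (mapsTo_upperInverse hab hτ.1) (le_upperInverse ht le_rfl))

end UpperInverse

section ArcLength

variable {ι : Type*} [Fintype ι]

lemma EuclideanSpace.dist_le_sum_abs_sub (x y : EuclideanSpace ℝ ι) :
    dist x y ≤ ∑ i, |x i - y i| := by
  rw [EuclideanSpace.dist_eq, Real.sqrt_le_iff]
  refine ⟨sum_nonneg fun _ _ => abs_nonneg _, ?_⟩
  simpa only [Real.dist_eq, sq_abs] using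
    sum_sq_le_sq_sum_of_nonneg fun i _ => abs_nonneg (x i - y i)

lemma EuclideanSpace.sum_abs_sub_le_sqrt_card_mul_dist (x y : EuclideanSpace ℝ ι) :
    ∑ i, |x i - y i| ≤ √(Fintype.card ι) * dist x y := by
  rw [EuclideanSpace.dist_eq, ← Real.sqrt_mul (Nat.cast_nonneg _),
    Real.le_sqrt (sum_nonneg fun _ _ => abs_nonneg _) (by positivity)]
  simpa only [Real.dist_eq, sq_abs, card_univ] using
    sq_sum_le_card_mul_sum_sq (s := univ) (f := fun i => |x i - y i|)

def IsL1ArcLengthOn (γ : ℝ → EuclideanSpace ℝ ι) (f : ℝ → ℝ) (s : Set ℝ) : Prop :=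
  ∀ x ∈ s, ∀ y ∈ s, x ≤ y → ∑ i, |γ y i - γ x i| = f y - f x

namespace IsL1ArcLengthOn

variable {γ : ℝ → EuclideanSpace ℝ ι} {f : ℝ → ℝ} {s : Set ℝ} {a b t x y : ℝ}

lemma monotoneOn (h : IsL1ArcLengthOn γ f s) : MonotoneOn f s := fun x hx y hy hxy =>
  sub_nonneg.1 (h x hx y hy hxy ▸ sum_nonneg fun _ _ => abs_nonneg _)

lemma sum_abs_sub_eq_abs (h : IsL1ArcLengthOn γ f s) (hx : x ∈ s) (hy : y ∈ s) :
    ∑ i, |γ x i - γ y i| = |f x - f y| := by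
  rcases le_total x y with hxy | hyx
  · simp_rw [abs_sub_comm (γ x _), abs_sub_comm (f x)]
    rw [h x hx y hy hxy, abs_of_nonneg (sub_nonneg.2 (h.monotoneOn hx hy hxy))]
  · rw [h y hy x hx hyx, abs_of_nonneg (sub_nonneg.2 (h.monotoneOn hy hx hyx))]

lemma eq_of_apply_eq (h : IsL1ArcLengthOn γ f s) (hx : x ∈ s) (hy : y ∈ s) (hf : f x = f y) :
    γ x = γ y := by
  have hzero := h.sum_abs_sub_eq_abs hx hy
  rw [hf, sub_self, abs_zero, sum_eq_zero_iff_of_nonneg fun _ _ => abs_nonneg _] at hzero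
  exact PiLp.ext fun i => sub_eq_zero.1 (abs_eq_zero.1 (hzero i (mem_univ i)))

lemma dist_le_abs_sub (h : IsL1ArcLengthOn γ f s) (hx : x ∈ s) (hy : y ∈ s) :
    dist (γ x) (γ y) ≤ |f x - f y| :=
  h.sum_abs_sub_eq_abs hx hy ▸ EuclideanSpace.dist_le_sum_abs_sub _ _

lemma abs_sub_le_sqrt_card_mul_dist (h : IsL1ArcLengthOn γ f s) (hx : x ∈ s) (hy : y ∈ s) :
    |f x - f y| ≤ √(Fintype.card ι) * dist (γ x) (γ y) :=
  h.sum_abs_sub_eq_abs hx hy ▸ EuclideanSpace.sum_abs_sub_le_sqrt_card_mul_dist _ _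

lemma apply_upperInverse_apply (h : IsL1ArcLengthOn γ f (Icc a b))
    (hf : ContinuousOn f (Icc a b)) (hab : a ≤ b) (ht : t ∈ Icc a b) :
    γ (upperInverse f a b (f t)) = γ t := by
  have hft : f t ∈ Icc (f a) (f b) :=
    ⟨h.monotoneOn (left_mem_Icc.2 hab) ht ht.1, h.monotoneOn ht (right_mem_Icc.2 hab) ht.2⟩
  exact h.eq_of_apply_eq (mapsTo_upperInverse hab hft.1) ht
    (apply_upperInverse hab hf h.monotoneOn hft)

lemma comp_upperInverse (h : IsL1ArcLengthOn γ f (Icc a b)) (hf : ContinuousOn f (Icc a b))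
    (hab : a ≤ b) : IsL1ArcLengthOn (γ ∘ upperInverse f a b) id (Icc (f a) (f b)) :=
  fun τ₁ hτ₁ τ₂ hτ₂ h₁₂ => by
    rw [Function.comp_apply, Function.comp_apply,
      h _ (mapsTo_upperInverse hab hτ₁.1) _ (mapsTo_upperInverse hab hτ₂.1)
        (monotoneOn_upperInverse hab hτ₁.1 hτ₂.1 h₁₂),
      apply_upperInverse hab hf h.monotoneOn hτ₁, apply_upperInverse hab hf h.monotoneOn hτ₂]
    rfl

end IsL1ArcLengthOn

end ArcLength

/-- Reparametrisation of a Lipschitz curve with nondecreasing coordinates to unit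
`ℓ¹`-speed: with `f(t) = Σᵢ (γ(t)ᵢ − γ(0)ᵢ)` and `γ̃(τ) = γ(sup{σ : f(σ) ≤ τ})`,
the curve `γ̃` has the same endpoints, satisfies `γ = γ̃ ∘ f`, has unit `ℓ¹`-speed
(hence nondecreasing coordinates), and is bi-Lipschitz for the Euclidean metric. -/
theorem unit_speed_reparametrisation
    (n : ℕ) (γ : ℝ → EuclideanSpace ℝ (Fin n))
    (K : NNReal) (hlip : LipschitzOnWith K γ (Icc (0 : ℝ) 1))
    (hmono : ∀ i, MonotoneOn (fun t => γ t i) (Icc (0 : ℝ) 1))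
    (hsum : ∑ i, (γ 1 i - γ 0 i) = 1)
    (f : ℝ → ℝ) (hf : ∀ t, f t = ∑ i, (γ t i - γ 0 i))
    (tγ : ℝ → EuclideanSpace ℝ (Fin n))
    (htγ : ∀ τ, tγ τ = γ (sSup {σ ∈ Icc (0 : ℝ) 1 | f σ ≤ τ})) :
    (tγ 0 = γ 0 ∧ tγ 1 = γ 1) ∧
    (∀ t ∈ Icc (0 : ℝ) 1, γ t = tγ (f t)) ∧
    (∀ τ₁ τ₂ : ℝ, 0 ≤ τ₁ → τ₁ ≤ τ₂ → τ₂ ≤ 1 →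
      ∑ i, |tγ τ₂ i - tγ τ₁ i| = τ₂ - τ₁) ∧
    (∀ i, MonotoneOn (fun τ => tγ τ i) (Icc (0 : ℝ) 1)) ∧
    (∃ C : ℝ, 1 ≤ C ∧ ∀ τ₁ ∈ Icc (0 : ℝ) 1, ∀ τ₂ ∈ Icc (0 : ℝ) 1,
      (1 / C) * |τ₂ - τ₁| ≤ dist (tγ τ₁) (tγ τ₂) ∧
      dist (tγ τ₁) (tγ τ₂) ≤ C * |τ₂ - τ₁|) := by
  have hf0 : f 0 = 0 := by simp [hf]
  have hf1 : f 1 = 1 := (hf 1).trans hsum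
  have hcont : ContinuousOn f (Icc 0 1) := by
    have := hlip.continuousOn
    exact (by fun_prop : ContinuousOn (fun t => ∑ i, (γ t i - γ 0 i)) _).congr fun t _ => hf t
  have hlen : IsL1ArcLengthOn γ f (Icc 0 1) := fun s hs t ht hst => by
    rw [hf, hf, ← sum_sub_distrib]
    refine sum_congr rfl fun i _ => ?_
    rw [abs_of_nonneg (sub_nonneg.2 (hmono i hs ht hst))]
    ring
  obtain rfl : tγ = γ ∘ upperInverse f 0 1 := funext htγ
  have hunit := hlen.comp_upperInverse hcont zero_le_one
  rw [hf0, hf1] at hunit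
  have hcomp t (ht : t ∈ Icc (0 : ℝ) 1) : γ t = (γ ∘ upperInverse f 0 1) (f t) :=
    (hlen.apply_upperInverse_apply hcont zero_le_one ht).symm
  have hn : 1 ≤ √(n : ℝ) := Real.one_le_sqrt.2 <| Nat.one_le_cast.2 <|
    Nat.one_le_iff_ne_zero.2 (by rintro rfl; simp at hsum)
  refine ⟨⟨by simpa [hf0] using (hcomp 0 (left_mem_Icc.2 zero_le_one)).symm,
      by simpa [hf1] using (hcomp 1 (right_mem_Icc.2 zero_le_one)).symm⟩,
    hcomp, fun τ₁ τ₂ h₀ h₁₂ h₁ => hunit τ₁ ⟨h₀, h₁₂.trans h₁⟩ τ₂ ⟨h₀.trans h₁₂, h₁⟩ h₁₂,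
    fun i => ((hmono i).comp (monotoneOn_upperInverse zero_le_one)
      (mapsTo_upperInverse zero_le_one)).mono fun _ hτ => hf0.trans_le hτ.1,
    √n, hn, fun τ₁ hτ₁ τ₂ hτ₂ => ⟨?_, ?_⟩⟩
  · rw [one_div_mul_eq_div, div_le_iff₀ (zero_lt_one.trans_le hn), mul_comm, abs_sub_comm]
    simpa using hunit.abs_sub_le_sqrt_card_mul_dist hτ₁ hτ₂
  · rw [abs_sub_comm]
    exact (hunit.dist_le_abs_sub hτ₁ hτ₂).trans (le_mul_of_one_le_left (abs_nonneg _) hn)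
end
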